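/- arXiv:1506.08883 — 7 statements merged into one kernel-verified Lean document; each statement's English description precedes it below -/
import Mathlib

section
/- Let ψ be a tripartite pure state on systems A, B, C such that ρ_AC = ρ_A ⊗ ρ_C, the matrix ρ_A has no zero eigenvalues, and ρ_A(j) = ρ_A for every measurement outcome j on B with P_j > 0. Then the eigenvalues λ_1 ≥ λ_2 ≥ … ≥ λ_{d_C} of ρ_C, listed in decreasing order, satisfy Σ_{k=1}^{m} λ_k ≤ min(m, d_A)/d_A for every 1 ≤ m ≤ d_C; that is, the eigenvalue sequence of ρ_C is majorized by the sequence with d_A entries equal to 1/d_A and all remaining entries equal to 0. -/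
open scoped BigOperators Kronecker
open scoped Classical

noncomputable def rhoA {dA dB dC : ℕ} (ψ : Fin dA × Fin dB × Fin dC → ℂ) :
    Matrix (Fin dA) (Fin dA) ℂ :=
  Matrix.of fun i i' => ∑ j : Fin dB, ∑ k : Fin dC,
    ψ (i, j, k) * (starRingEnd ℂ) (ψ (i', j, k))

noncomputable def rhoC {dA dB dC : ℕ} (ψ : Fin dA × Fin dB × Fin dC → ℂ) :
    Matrix (Fin dC) (Fin dC) ℂ :=
  Matrix.of fun k k' => ∑ i : Fin dA, ∑ j : Fin dB,
    ψ (i, j, k) * (starRingEnd ℂ) (ψ (i, j, k'))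

noncomputable def rhoAC {dA dB dC : ℕ} (ψ : Fin dA × Fin dB × Fin dC → ℂ) :
    Matrix (Fin dA × Fin dC) (Fin dA × Fin dC) ℂ :=
  Matrix.of fun p q => ∑ j : Fin dB, ψ (p.1, j, p.2) * (starRingEnd ℂ) (ψ (q.1, j, q.2))

noncomputable def probB {dA dB dC : ℕ} (ψ : Fin dA × Fin dB × Fin dC → ℂ) (j : Fin dB) : ℝ :=
  ∑ i : Fin dA, ∑ k : Fin dC, Complex.normSq (ψ (i, j, k))

noncomputable def rhoAPost {dA dB dC : ℕ} (ψ : Fin dA × Fin dB × Fin dC → ℂ) (j : Fin dB) :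
    Matrix (Fin dA) (Fin dA) ℂ :=
  Matrix.of fun i i' => (probB ψ j : ℂ)⁻¹ *
    ∑ k : Fin dC, ψ (i, j, k) * (starRingEnd ℂ) (ψ (i', j, k))

def Normalized {dA dB dC : ℕ} (ψ : Fin dA × Fin dB × Fin dC → ℂ) : Prop :=
  ∑ i : Fin dA, ∑ j : Fin dB, ∑ k : Fin dC, Complex.normSq (ψ (i, j, k)) = 1

/-!
For a vector `x`, put `u j := Ψⱼ x̄`, where `Ψⱼ` is the `d_A × d_C` slice of `ψ` at outcome `j`.
The product condition `ρ_AC = ρ_A ⊗ ρ_C` gives `∑ⱼ uⱼ uⱼᴴ = ⟨x, ρ_C x⟩ ρ_A`; pairing with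
`ρ_A⁻¹` and taking traces yields `d_A ⟨x, ρ_C x⟩ = ∑ⱼ uⱼᴴ ρ_A⁻¹ uⱼ`. The post-measurement
condition says `Ψⱼ Ψⱼᴴ = Pⱼ ρ_A`, so `ρ_A⁻¹ / Pⱼ` inverts `Ψⱼ Ψⱼᴴ` on the range of `Ψⱼ`, and
`uⱼᴴ ρ_A⁻¹ uⱼ` is `Pⱼ` times the squared length of the orthogonal projection of `x̄` onto the row
space of `Ψⱼ`, hence at most `Pⱼ ‖x‖²`. Summing over `j`, every eigenvalue of `ρ_C` is at most
`1 / d_A`; as they are nonnegative with sum `1`, the bound on partial sums follows.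
-/

open Matrix ComplexConjugate ComplexOrder

section Projection

variable {𝕜 m n : Type*} [RCLike 𝕜] [Fintype m] [Fintype n]

lemma re_star_dotProduct_le_norm_mul_norm (y v : n → 𝕜) :
    RCLike.re (star y ⬝ᵥ v) ≤ ‖WithLp.toLp 2 y‖ * ‖WithLp.toLp 2 v‖ := by
  simpa only [EuclideanSpace.inner_toLp_toLp, dotProduct_comm] using
    re_inner_le_norm (𝕜 := 𝕜) (WithLp.toLp 2 y) (WithLp.toLp 2 v)

lemma re_star_dotProduct_self (y : n → 𝕜) :
    RCLike.re (star y ⬝ᵥ y) = ‖WithLp.toLp 2 y‖ ^ 2 := by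
  rw [← RCLike.ofReal_re (K := 𝕜) (‖WithLp.toLp 2 y‖ ^ 2), RCLike.ofReal_pow,
    ← inner_self_eq_norm_sq_to_K, EuclideanSpace.inner_toLp_toLp, dotProduct_comm]

/-- With `v := Mᴴ z`, the hypothesis gives `‖v‖² = c ⟪y, v⟫`, so Cauchy–Schwarz bounds
`‖v‖ ≤ c ‖y‖`; when `c = 1`, `v` is the orthogonal projection of `y` onto the row space of `M`. -/
theorem re_star_mulVec_dotProduct_le (M : Matrix m n 𝕜) {c : ℝ} (hc : 0 ≤ c) (y : n → 𝕜)
    {z : m → 𝕜} (h : (M * Mᴴ) *ᵥ z = (c : 𝕜) • (M *ᵥ y)) :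
    RCLike.re (star (M *ᵥ y) ⬝ᵥ z) ≤ c * RCLike.re (star y ⬝ᵥ y) := by
  set v := Mᴴ *ᵥ z
  have hw : star (M *ᵥ y) ⬝ᵥ z = star y ⬝ᵥ v := by
    rw [star_mulVec, ← dotProduct_mulVec]
  have hv : ‖WithLp.toLp 2 v‖ ^ 2 = c * RCLike.re (star y ⬝ᵥ v) := by
    rw [← re_star_dotProduct_self, star_mulVec, conjTranspose_conjTranspose, ← dotProduct_mulVec,
      mulVec_mulVec, h, dotProduct_smul, smul_eq_mul, RCLike.re_ofReal_mul, ← hw,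
      star_dotProduct, RCLike.star_def, RCLike.conj_re]
  have hcs := re_star_dotProduct_le_norm_mul_norm y v
  have hv_le : ‖WithLp.toLp 2 v‖ ≤ c * ‖WithLp.toLp 2 y‖ := by
    have : ‖WithLp.toLp 2 v‖ * ‖WithLp.toLp 2 v‖ ≤ c * ‖WithLp.toLp 2 y‖ * ‖WithLp.toLp 2 v‖ := by
      nlinarith [mul_le_mul_of_nonneg_left hcs hc]
    nlinarith [norm_nonneg (WithLp.toLp 2 v), mul_nonneg hc (norm_nonneg (WithLp.toLp 2 y))]
  rw [hw, re_star_dotProduct_self]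
  nlinarith [norm_nonneg (WithLp.toLp 2 v), norm_nonneg (WithLp.toLp 2 y)]

end Projection

lemma Finset.sum_le_min_card_div_of_mul_le_one {ι : Type*} [Fintype ι] {f : ι → ℝ} {d : ℕ}
    (hd : 0 < d) (h0 : ∀ i, 0 ≤ f i) (hle : ∀ i, d * f i ≤ 1) (hsum : ∑ i, f i = 1)
    (s : Finset ι) : ∑ i ∈ s, f i ≤ (min s.card d : ℝ) / d := by
  rcases le_total s.card d with hs | hs
  · rw [min_eq_left (by exact_mod_cast hs), le_div_iff₀' (by positivity), mul_sum]
    simpa using sum_le_sum fun i (_ : i ∈ s) => hle i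
  · rw [min_eq_right (by exact_mod_cast hs), div_self (by positivity), ← hsum]
    exact sum_le_sum_of_subset_of_nonneg (subset_univ s) fun i _ _ => h0 i

section TripartiteState

variable {dA dB dC : ℕ} (ψ : Fin dA × Fin dB × Fin dC → ℂ)

def sliceB (j : Fin dB) : Matrix (Fin dA) (Fin dC) ℂ := Matrix.of fun i k => ψ (i, j, k)

lemma probB_nonneg (j : Fin dB) : 0 ≤ probB ψ j :=
  Finset.sum_nonneg fun _ _ => Finset.sum_nonneg fun _ _ => Complex.normSq_nonneg _

lemma sum_probB (hnorm : Normalized ψ) : ∑ j, probB ψ j = 1 := by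
  rw [← hnorm, Finset.sum_comm]
  rfl

lemma trace_slice_mul_conjTranspose (j : Fin dB) :
    (sliceB ψ j * (sliceB ψ j)ᴴ).trace = probB ψ j := by
  simp [trace, mul_apply, sliceB, probB, Complex.mul_conj]

lemma slice_mul_conjTranspose (hpost : ∀ j : Fin dB, 0 < probB ψ j → rhoAPost ψ j = rhoA ψ)
    (j : Fin dB) : sliceB ψ j * (sliceB ψ j)ᴴ = (probB ψ j : ℂ) • rhoA ψ := by
  rcases (probB_nonneg ψ j).eq_or_lt with hP | hP
  · rw [← hP, Complex.ofReal_zero, zero_smul,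
      ← (posSemidef_self_mul_conjTranspose _).trace_eq_zero_iff, trace_slice_mul_conjTranspose,
      ← hP, Complex.ofReal_zero]
  · rw [← hpost j hP]
    ext i i'
    simp [rhoAPost, sliceB, mul_apply, ← mul_assoc,
      mul_inv_cancel₀ (Complex.ofReal_ne_zero.mpr hP.ne')]

lemma posSemidef_rhoC : (rhoC ψ).PosSemidef := by
  convert posSemidef_conjTranspose_mul_self
    (Matrix.of fun (p : Fin dA × Fin dB) k => conj (ψ (p.1, p.2, k)))
  ext k k'
  simp [rhoC, mul_apply, Fintype.sum_prod_type]

lemma trace_rhoC (hnorm : Normalized ψ) : (rhoC ψ).trace = 1 := by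
  rw [← Complex.ofReal_one, ← hnorm]
  simp only [trace, diag_apply, rhoC, of_apply, Complex.mul_conj, Complex.ofReal_sum]
  rw [Finset.sum_comm]
  exact Finset.sum_congr rfl fun _ _ => Finset.sum_comm

lemma sum_vecMulVec_slice_mulVec (hfac : rhoAC ψ = rhoA ψ ⊗ₖ rhoC ψ) (x : Fin dC → ℂ) :
    ∑ j, vecMulVec (sliceB ψ j *ᵥ star x) (star (sliceB ψ j *ᵥ star x)) =
      (star x ⬝ᵥ rhoC ψ *ᵥ x) • rhoA ψ := by
  have hent : ∀ i i' a b, ∑ j, ψ (i, j, a) * conj (ψ (i', j, b)) = rhoA ψ i i' * rhoC ψ a b :=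
    fun i i' a b => congrFun (congrFun hfac (i, a)) (i', b)
  ext i i'
  simp only [Matrix.sum_apply, vecMulVec_apply, mulVec, dotProduct, sliceB, of_apply,
    Pi.star_apply, Matrix.smul_apply, smul_eq_mul, star_sum, star_mul', RCLike.star_def,
    Finset.sum_mul, Finset.mul_sum, Complex.conj_conj]
  have hterm : ∀ a b, conj (x a) * (rhoC ψ a b * x b) * rhoA ψ i i' =
      ∑ j, ψ (i, j, a) * conj (x a) * (conj (ψ (i', j, b)) * x b) := by
    intro a b
    rw [mul_comm (rhoC ψ a b), mul_assoc, mul_assoc, mul_comm (rhoC ψ a b), ← hent,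
      Finset.mul_sum, Finset.mul_sum]
    exact Finset.sum_congr rfl fun j _ => by ring
  simp only [hterm]
  rw [Finset.sum_comm, Finset.sum_congr rfl fun b _ => Finset.sum_comm, Finset.sum_comm]

theorem natCast_mul_re_dotProduct_rhoC_le (hnorm : Normalized ψ)
    (hfac : rhoAC ψ = rhoA ψ ⊗ₖ rhoC ψ)
    (hpost : ∀ j : Fin dB, 0 < probB ψ j → rhoAPost ψ j = rhoA ψ)
    (hρ : IsUnit (rhoA ψ).det) (x : Fin dC → ℂ) :
    (dA : ℝ) * (star x ⬝ᵥ rhoC ψ *ᵥ x).re ≤ (star x ⬝ᵥ x).re := by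
  set Q := star x ⬝ᵥ rhoC ψ *ᵥ x
  set u := fun j => sliceB ψ j *ᵥ star x
  have htrace : (dA : ℂ) * Q = ∑ j, star (u j) ⬝ᵥ (rhoA ψ)⁻¹ *ᵥ u j := by
    calc (dA : ℂ) * Q = ((rhoA ψ)⁻¹ * (Q • rhoA ψ)).trace := by
          rw [mul_smul_comm, nonsing_inv_mul _ hρ, trace_smul, trace_one, smul_eq_mul,
            Fintype.card_fin, mul_comm]
      _ = ∑ j, star (u j) ⬝ᵥ (rhoA ψ)⁻¹ *ᵥ u j := by
          rw [← sum_vecMulVec_slice_mulVec ψ hfac, Finset.mul_sum, trace_sum]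
          simp only [mul_vecMulVec, trace_vecMulVec, dotProduct_comm, u]
  have hterm : ∀ j, (star (u j) ⬝ᵥ (rhoA ψ)⁻¹ *ᵥ u j).re ≤ probB ψ j * (star x ⬝ᵥ x).re := by
    intro j
    have hproj : (sliceB ψ j * (sliceB ψ j)ᴴ) *ᵥ ((rhoA ψ)⁻¹ *ᵥ u j) = (probB ψ j : ℂ) • u j := by
      rw [slice_mul_conjTranspose ψ hpost, mulVec_mulVec, smul_mul_assoc,
        mul_nonsing_inv _ hρ, smul_mulVec, one_mulVec]
    simpa [dotProduct_comm] using
      re_star_mulVec_dotProduct_le (sliceB ψ j) (probB_nonneg ψ j) (star x) hproj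
  calc (dA : ℝ) * Q.re = ∑ j, (star (u j) ⬝ᵥ (rhoA ψ)⁻¹ *ᵥ u j).re := by
        rw [← Complex.re_sum, ← htrace, ← Complex.ofReal_natCast, Complex.re_ofReal_mul]
    _ ≤ ∑ j, probB ψ j * (star x ⬝ᵥ x).re := Finset.sum_le_sum fun j _ => hterm j
    _ = (star x ⬝ᵥ x).re := by rw [← Finset.sum_mul, sum_probB ψ hnorm, one_mul]

end TripartiteState

/-- The eigenvalue sequence of `ρ_C` is majorized by `(1/d_A, …, 1/d_A, 0, …)`:
equivalently, the sum of the eigenvalues over any set `s` of indices is at most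
`min (|s|) d_A / d_A`.  (The sum of the `m` largest eigenvalues is the maximum over
index sets of cardinality `m` of the corresponding eigenvalue sums.) -/
theorem stmt1 {dA dB dC : ℕ} (ψ : Fin dA × Fin dB × Fin dC → ℂ) (hnorm : Normalized ψ)
    (hfac : rhoAC ψ = rhoA ψ ⊗ₖ rhoC ψ)
    (hA : (rhoA ψ).IsHermitian)
    (hAfull : ∀ a : Fin dA, hA.eigenvalues a ≠ 0)
    (hpost : ∀ j : Fin dB, 0 < probB ψ j → rhoAPost ψ j = rhoA ψ)
    (hC : (rhoC ψ).IsHermitian) :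
    ∀ s : Finset (Fin dC), ∑ k ∈ s, hC.eigenvalues k ≤ (min s.card dA : ℝ) / dA := by
  intro s
  have hdA : 0 < dA := Nat.pos_of_ne_zero (by rintro rfl; simp [Normalized] at hnorm)
  have hρ : IsUnit (rhoA ψ).det := by
    rw [hA.det_eq_prod_eigenvalues]
    exact IsUnit.mk0 _ <| Finset.prod_ne_zero_iff.mpr fun a _ =>
      Complex.ofReal_ne_zero.mpr (hAfull a)
  have hle : ∀ k, (dA : ℝ) * hC.eigenvalues k ≤ 1 := by
    intro k
    have hunit : (star ⇑(hC.eigenvectorBasis k) ⬝ᵥ ⇑(hC.eigenvectorBasis k)).re = 1 := by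
      rw [← RCLike.re_to_complex, re_star_dotProduct_self]
      simp [hC.eigenvectorBasis.orthonormal.1 k]
    have := natCast_mul_re_dotProduct_rhoC_le ψ hnorm hfac hpost hρ (hC.eigenvectorBasis k)
    rwa [hunit, ← RCLike.re_to_complex, ← hC.eigenvalues_eq] at this
  have hsum : ∑ k, hC.eigenvalues k = 1 := by
    have := hC.trace_eq_sum_eigenvalues
    rw [trace_rhoC ψ hnorm] at this
    simpa using congrArg Complex.re this.symm
  exact Finset.sum_le_min_card_div_of_mul_le_one hdA (posSemidef_rhoC ψ).eigenvalues_nonneg hle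
    hsum s
end

section
/- Let ρ_C be a d_C×d_C density matrix whose eigenvalues λ_1 ≥ λ_2 ≥ … ≥ λ_{d_C}, listed in decreasing order, satisfy Σ_{k=1}^{m} λ_k ≤ min(m, d_A)/d_A for every 1 ≤ m ≤ d_C. Then there exist a dimension d_B and a tripartite pure state ψ on systems A, B, C with local dimensions d_A, d_B, d_C such that the reduced density matrix of ψ on C equals ρ_C, the reduced density matrix on A equals the maximally mixed state I/d_A, ρ_AC = ρ_A ⊗ ρ_C, and ρ_A(j) = ρ_A for every measurement outcome j on B with P_j > 0. -/
/-!
Diagonalise `ρ_C = ∑ₘ λₘ uₘ uₘ*`. Since `d_A λ ∈ [0,1]^{d_C}` with sum `d_A`, the matrix whose rows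
indexed by a `d_A`-set `s` equal `λ`, the remaining rows sharing `1 - d_A λ`, is doubly stochastic;
Birkhoff writes it as `∑_σ w_σ P_σ`, so for every `r ∈ s` the law of `σ r` under `w` is `λ`.
Take the outcomes on `B` to be pairs `(σ, χ)` of a permutation of `C`'s basis and a character of
`ℤ/d_A`, and put `ψ(i, (σ, χ), k) = √w_σ / d_A · χ(i) · u_{σ(f i)}(k)` for an embedding
`f : Fin d_A ↪ Fin d_C`. For a fixed outcome the vectors `ψ(i, (σ, χ), ·)` are orthogonal of equal
norm, so `ρ_A(j) = I/d_A`. Summing `χ(i) χ(i')*` over all characters kills the off-diagonal blocks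
of `ρ_AC`, and averaging over `σ` turns each diagonal block into `∑ₘ λₘ uₘ uₘ* / d_A = ρ_C / d_A`.
-/

open scoped BigOperators Kronecker
open scoped Classical ComplexOrder

open Matrix Finset ComplexConjugate

lemma AddChar.mul_conj_apply {α : Type*} [AddCommGroup α] [Finite α] (χ : AddChar α ℂ)
    (a b : α) :
    χ a * conj (χ b) = χ (a - b) := by
  rw [← AddChar.map_neg_eq_conj, ← AddChar.map_add_eq_mul, sub_eq_add_neg]

lemma AddChar.sum_mul_conj_apply {α : Type*} [AddCommGroup α] [Fintype α] [DecidableEq α]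
    (a b : α) :
    ∑ χ : AddChar α ℂ, χ a * conj (χ b) = if a = b then (Fintype.card α : ℂ) else 0 := by
  simp only [AddChar.mul_conj_apply, AddChar.sum_apply_eq_ite, sub_eq_zero]

lemma Matrix.IsHermitian.apply_eq_sum_eigenvalues {𝕜 n : Type*} [RCLike 𝕜] [Fintype n]
    [DecidableEq n] {A : Matrix n n 𝕜} (hA : A.IsHermitian) (k k' : n) :
    A k k' = ∑ m, (hA.eigenvalues m : 𝕜) * hA.eigenvectorUnitary k m *
      star (hA.eigenvectorUnitary k' m) := by
  conv_lhs => rw [hA.spectral_theorem, Unitary.conjStarAlgAut_apply]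
  rw [mul_apply]
  simp [mul_diagonal, mul_comm, mul_left_comm]

lemma exists_perm_weights_of_card_mul_le_one {n : Type*} [Fintype n] [DecidableEq n]
    (s : Finset n) {μ : n → ℝ} (hμ0 : ∀ m, 0 ≤ μ m) (hμ1 : ∑ m, μ m = 1)
    (hμs : ∀ m, #s * μ m ≤ 1) :
    ∃ w : Equiv.Perm n → ℝ, (∀ σ, 0 ≤ w σ) ∧ ∀ r ∈ s, ∀ m, ∑ σ with σ r = m, w σ = μ m := by
  set c : ℝ := ((#sᶜ : ℕ) : ℝ)
  have hc : ∑ m, (1 - #s * μ m) = c := by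
    simp [c, sum_sub_distrib, ← mul_sum, hμ1, card_compl, Nat.cast_sub (card_le_univ s)]
  -- the rows outside `s` share the column mass left over by the rows in `s`
  let M : Matrix n n ℝ := of fun r m => if r ∈ s then μ m else (1 - #s * μ m) / c
  have hcol (m : n) : c * ((1 - #s * μ m) / c) = 1 - #s * μ m := by
    rcases eq_or_ne c 0 with h | h
    · -- `s = univ`: the division is junk, but then every `#s * μ m` is already `1`
      have := (sum_eq_zero_iff_of_nonneg fun m _ => sub_nonneg.2 (hμs m)).1
        (hc.trans h) m (mem_univ m)
      simp [h, this]
    · field_simp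
  have hM : M ∈ doublyStochastic ℝ n := by
    refine mem_doublyStochastic_iff_sum.2 ⟨fun r m => ?_, fun r => ?_, fun m => ?_⟩
    · simp only [M, of_apply]
      split_ifs
      · exact hμ0 m
      · exact div_nonneg (sub_nonneg.2 (hμs m)) (Nat.cast_nonneg _)
    · by_cases hr : r ∈ s
      · simpa [M, hr] using hμ1
      · have : c ≠ 0 := by simpa [c] using fun h : s = univ => hr (h ▸ mem_univ r)
        simp [M, hr, ← sum_div, hc, this]
    · simp only [M, of_apply, sum_ite, sum_const, filter_mem_eq_inter, univ_inter, nsmul_eq_mul]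
      rw [filter_not, filter_mem_eq_inter, univ_inter, ← compl_eq_univ_sdiff, hcol]
      ring
  obtain ⟨w, hw0, -, hwM⟩ := exists_eq_sum_perm_of_mem_doublyStochastic hM
  refine ⟨w, hw0, fun r hr m => ?_⟩
  simpa [M, hr, Matrix.sum_apply, PEquiv.toMatrix_apply, sum_filter] using congrFun₂ hwM r m

lemma sum_perm_mul_apply_eq_sum {n : Type*} [Fintype n] [DecidableEq n]
    {w : Equiv.Perm n → ℝ} {μ : n → ℝ} {r : n} (h : ∀ m, ∑ σ with σ r = m, w σ = μ m)
    (g : n → ℂ) : ∑ σ, (w σ : ℂ) * g (σ r) = ∑ m, (μ m : ℂ) * g m := by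
  rw [← sum_fiberwise univ (fun σ => σ r)]
  refine sum_congr rfl fun m _ => ?_
  rw [← h m, Complex.ofReal_sum, sum_mul]
  exact sum_congr rfl fun σ hσ => by rw [(mem_filter.1 hσ).2]

section ReducedStates

variable {dA dB dC : ℕ} (ψ : Fin dA × Fin dB × Fin dC → ℂ)

lemma rhoA_apply_eq_sum_rhoAC (i i' : Fin dA) :
    rhoA ψ i i' = ∑ k, rhoAC ψ (i, k) (i', k) := by
  simp only [rhoA, rhoAC, of_apply]
  exact sum_comm

lemma rhoC_apply_eq_sum_rhoAC (k k' : Fin dC) :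
    rhoC ψ k k' = ∑ i, rhoAC ψ (i, k) (i, k') :=
  rfl

lemma probB_eq_sum_mul_conj (j : Fin dB) :
    (probB ψ j : ℂ) = ∑ i, ∑ k, ψ (i, j, k) * conj (ψ (i, j, k)) := by
  simp [probB, Complex.mul_conj]

lemma normalized_iff_trace_rhoA : Normalized ψ ↔ (rhoA ψ).trace = 1 := by
  simp [Normalized, trace, rhoA, Complex.mul_conj, ← Complex.ofReal_inj]

variable {ψ}

lemma rhoA_eq_of_rhoAC_eq_kronecker {σ : Matrix (Fin dA) (Fin dA) ℂ}
    {ρ : Matrix (Fin dC) (Fin dC) ℂ} (h : rhoAC ψ = σ ⊗ₖ ρ) : rhoA ψ = ρ.trace • σ := by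
  ext i i'
  simp [rhoA_apply_eq_sum_rhoAC, h, trace, mul_sum, mul_comm]

lemma rhoC_eq_of_rhoAC_eq_kronecker {σ : Matrix (Fin dA) (Fin dA) ℂ}
    {ρ : Matrix (Fin dC) (Fin dC) ℂ} (h : rhoAC ψ = σ ⊗ₖ ρ) : rhoC ψ = σ.trace • ρ := by
  ext k k'
  simp [rhoC_apply_eq_sum_rhoAC, h, trace, sum_mul]

lemma rhoAPost_eq_of_sum_mul_conj_eq_ite {j : Fin dB} {q : ℂ}
    (hq : ∀ i i', ∑ k, ψ (i, j, k) * conj (ψ (i', j, k)) = if i = i' then q else 0)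
    (hj : 0 < probB ψ j) : rhoAPost ψ j = (dA : ℂ)⁻¹ • 1 := by
  have hP : (probB ψ j : ℂ) = dA * q := by simp [probB_eq_sum_mul_conj, hq]
  have hq0 : (dA : ℂ) * q ≠ 0 := hP ▸ Complex.ofReal_ne_zero.2 hj.ne'
  ext i i'
  simp only [rhoAPost, of_apply, hq, hP, Matrix.smul_apply, one_apply, smul_eq_mul]
  split_ifs
  · field_simp [left_ne_zero_of_mul hq0, right_ne_zero_of_mul hq0]
  · simp

end ReducedStates

section FrameState

abbrev FrameOutcome (dA dC : ℕ) [NeZero dA] : Type :=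
  Equiv.Perm (Fin dC) × AddChar (Fin dA) ℂ

variable {dA dC : ℕ} [NeZero dA]

noncomputable def frameState (w : Equiv.Perm (Fin dC) → ℝ) (f : Fin dA ↪ Fin dC)
    (U : Matrix (Fin dC) (Fin dC) ℂ) :
    Fin dA × Fin (Fintype.card (FrameOutcome dA dC)) × Fin dC → ℂ :=
  fun x => let b := (Fintype.equivFin _).symm x.2.1
    ((√(w b.1) / dA : ℝ) : ℂ) * b.2 x.1 * U x.2.2 (b.1 (f x.1))

variable {w : Equiv.Perm (Fin dC) → ℝ} {f : Fin dA ↪ Fin dC} {U : Matrix (Fin dC) (Fin dC) ℂ}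

lemma frameState_mul_conj (hw : ∀ σ, 0 ≤ w σ) (b : FrameOutcome dA dC) (i i' : Fin dA)
    (k k' : Fin dC) :
    frameState w f U (i, Fintype.equivFin _ b, k) *
        conj (frameState w f U (i', Fintype.equivFin _ b, k')) =
      ((w b.1 / dA ^ 2 : ℝ) : ℂ) * (b.2 i * conj (b.2 i')) *
        (U k (b.1 (f i)) * conj (U k' (b.1 (f i')))) := by
  have hsq : ((√(w b.1) / dA : ℝ) : ℂ) * conj ((√(w b.1) / dA : ℝ) : ℂ) =
      ((w b.1 / dA ^ 2 : ℝ) : ℂ) := by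
    rw [Complex.conj_ofReal, ← Complex.ofReal_mul, div_mul_div_comm, Real.mul_self_sqrt (hw _), sq]
  simp only [frameState, Equiv.symm_apply_apply, map_mul, ← hsq]
  ring

lemma sum_frameState_mul_conj (hU : star U * U = 1) (hw : ∀ σ, 0 ≤ w σ)
    (j : Fin (Fintype.card (FrameOutcome dA dC))) (i i' : Fin dA) :
    ∑ k, frameState w f U (i, j, k) * conj (frameState w f U (i', j, k)) =
      if i = i' then ((w ((Fintype.equivFin _).symm j).1 / dA ^ 2 : ℝ) : ℂ) else 0 := by
  obtain ⟨⟨σ, χ⟩, rfl⟩ := (Fintype.equivFin _).surjective j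
  have horth : ∑ k, U k (σ (f i)) * conj (U k (σ (f i'))) = if i = i' then 1 else 0 := by
    simpa [mul_apply, one_apply, mul_comm, eq_comm] using congrFun₂ hU (σ (f i')) (σ (f i))
  simp_rw [frameState_mul_conj hw, ← mul_sum, horth, Equiv.symm_apply_apply]
  split_ifs with h
  · subst h; simp [AddChar.mul_conj_apply]
  · simp

lemma rhoAC_frameState (hw : ∀ σ, 0 ≤ w σ) {μ : Fin dC → ℝ}
    {ρ : Matrix (Fin dC) (Fin dC) ℂ}
    (hρ : ∀ k k', ρ k k' = ∑ m, (μ m : ℂ) * U k m * conj (U k' m))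
    (hwμ : ∀ i m, ∑ σ with σ (f i) = m, w σ = μ m) :
    rhoAC (frameState w f U) = ((dA : ℂ)⁻¹ • 1) ⊗ₖ ρ := by
  ext ⟨i, k⟩ ⟨i', k'⟩
  simp only [rhoAC, of_apply, kroneckerMap_apply, Matrix.smul_apply, one_apply, smul_eq_mul]
  rw [← (Fintype.equivFin _).sum_comp, Fintype.sum_prod_type]
  simp_rw [frameState_mul_conj hw, ← sum_mul, ← mul_sum, AddChar.sum_mul_conj_apply]
  split_ifs with h
  · subst h
    rw [hρ]
    simp_rw [mul_assoc, ← sum_perm_mul_apply_eq_sum (hwμ i), mul_sum]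
    refine sum_congr rfl fun σ _ => ?_
    push_cast
    rw [Fintype.card_fin]
    field_simp
  · simp

end FrameState

/-- Given a density matrix `ρC` whose eigenvalue sequence is majorized by
`(1/d_A, …, 1/d_A, 0, …)` (equivalently, the eigenvalue sum over any index set `s` is at
most `min |s| d_A / d_A`), there is a tripartite pure state realizing `ρC` on `C`, the
maximally mixed state on `A`, factorized `ρ_AC`, and unchanged `ρ_A` after any measurement
outcome on `B`. -/
theorem stmt2 (dA dC : ℕ) (hdA : 0 < dA) (ρC : Matrix (Fin dC) (Fin dC) ℂ)
    (hC : ρC.PosSemidef) (htr : ρC.trace = 1)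
    (hmaj : ∀ s : Finset (Fin dC), ∑ k ∈ s, hC.1.eigenvalues k ≤ (min s.card dA : ℝ) / dA) :
    ∃ (dB : ℕ) (ψ : Fin dA × Fin dB × Fin dC → ℂ),
      Normalized ψ ∧
      rhoC ψ = ρC ∧
      rhoA ψ = (dA : ℂ)⁻¹ • (1 : Matrix (Fin dA) (Fin dA) ℂ) ∧
      rhoAC ψ = rhoA ψ ⊗ₖ rhoC ψ ∧
      ∀ j : Fin dB, 0 < probB ψ j → rhoAPost ψ j = rhoA ψ := by
  have : NeZero dA := ⟨hdA.ne'⟩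
  have hdA' : (0 : ℝ) < dA := by exact_mod_cast hdA
  have hμ1 : ∑ m, hC.1.eigenvalues m = 1 := by
    simpa using congrArg Complex.re (hC.1.trace_eq_sum_eigenvalues.symm.trans htr)
  have hdAμ (m : Fin dC) : (dA : ℝ) * hC.1.eigenvalues m ≤ 1 := by
    have h := hmaj {m}
    rwa [sum_singleton, card_singleton, Nat.cast_one, min_eq_left (by exact_mod_cast hdA),
      le_div_iff₀' hdA'] at h
  have hdAdC : dA ≤ dC := by
    have h := hmaj univ
    rw [hμ1, card_univ, Fintype.card_fin, le_div_iff₀ hdA', one_mul] at h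
    exact_mod_cast h.trans (min_le_left _ _)
  set f := Fin.castLEEmb hdAdC
  obtain ⟨w, hw0, hw⟩ := exists_perm_weights_of_card_mul_le_one (univ.map f)
    hC.eigenvalues_nonneg hμ1 (by simpa using hdAμ)
  set ψ := frameState w f (hC.1.eigenvectorUnitary : Matrix (Fin dC) (Fin dC) ℂ)
  have hrhoAC : rhoAC ψ = ((dA : ℂ)⁻¹ • 1) ⊗ₖ ρC :=
    rhoAC_frameState hw0 hC.1.apply_eq_sum_eigenvalues fun i => hw _ (by simp)
  have htrA : ((dA : ℂ)⁻¹ • (1 : Matrix (Fin dA) (Fin dA) ℂ)).trace = 1 := by simp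
  have hrhoA : rhoA ψ = (dA : ℂ)⁻¹ • 1 := by
    simpa [htr] using rhoA_eq_of_rhoAC_eq_kronecker hrhoAC
  have hrhoC : rhoC ψ = ρC := by simpa [htrA] using rhoC_eq_of_rhoAC_eq_kronecker hrhoAC
  refine ⟨_, ψ, (normalized_iff_trace_rhoA ψ).2 (hrhoA ▸ htrA), hrhoC, hrhoA, ?_,
    fun j hj => ?_⟩
  · rw [hrhoA, hrhoC, hrhoAC]
  rw [hrhoA]
  exact rhoAPost_eq_of_sum_mul_conj_eq_ite
    (sum_frameState_mul_conj (Unitary.coe_star_mul_self _) hw0 j) hj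
end

section
/- Let ψ be a non-negative tripartite pure state on systems A, B, C with ρ_AC = ρ_A ⊗ ρ_C. For each measurement outcome j with P_j > 0 and each l ∈ Fin d_A, let v_l(j) ∈ ℝ^{d_C} be the vector with entries (v_l(j))_k = ψ(l,j,k)/√(P_j). Then for all l, m ∈ Fin d_A: Σ_j P_j · |v_l(j)|₁ · |v_m(j)|₁ = (ρ_A)_{l,m} · Σ_{k,k'} (ρ_C)_{k,k'}, where the sum over j runs over outcomes with P_j > 0 and |v|₁ = Σ_k |v_k| denotes the ℓ¹-norm. -/
open scoped BigOperators Kronecker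
open scoped Classical

/-- The state has non-negative real amplitudes. -/
def NonNeg {dA dB dC : ℕ} (ψ : Fin dA × Fin dB × Fin dC → ℂ) : Prop :=
  ∀ x, 0 ≤ (ψ x).re ∧ (ψ x).im = 0

/-- The vector `v_l(j) ∈ ℝ^{d_C}` with entries `ψ(l,j,k)/√(P_j)`. -/
noncomputable def vVec {dA dB dC : ℕ} (ψ : Fin dA × Fin dB × Fin dC → ℂ)
    (l : Fin dA) (j : Fin dB) : Fin dC → ℝ :=
  fun k => (ψ (l, j, k)).re / Real.sqrt (probB ψ j)

theorem stmt3 {dA dB dC : ℕ} (ψ : Fin dA × Fin dB × Fin dC → ℂ)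
    (hnorm : Normalized ψ) (hpos : NonNeg ψ)
    (hfac : rhoAC ψ = rhoA ψ ⊗ₖ rhoC ψ) (l m : Fin dA) :
    ((∑ j ∈ Finset.univ.filter (fun j => 0 < probB ψ j),
        probB ψ j * ((∑ k, |vVec ψ l j k|) * (∑ k, |vVec ψ m j k|)) : ℝ) : ℂ) =
      rhoA ψ l m * ∑ k : Fin dC, ∑ k' : Fin dC, rhoC ψ k k' := by

  -- basic facts
  have hre : ∀ x, ψ x = ((ψ x).re : ℂ) := by
    intro x
    exact Complex.ext rfl (hpos x).2
  have hP0 : ∀ j, ¬ 0 < probB ψ j → ∀ i k, (ψ (i, j, k)).re = 0 := by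
    intro j hj i k
    have hnn : 0 ≤ probB ψ j := by
      apply Finset.sum_nonneg; intro i _; apply Finset.sum_nonneg; intro k _
      exact Complex.normSq_nonneg _
    have hz : probB ψ j = 0 := le_antisymm (not_lt.mp hj) hnn
    have h1 : ∀ i ∈ (Finset.univ : Finset (Fin dA)),
        (∑ k : Fin dC, Complex.normSq (ψ (i, j, k))) = 0 := by
      rw [← Finset.sum_eq_zero_iff_of_nonneg]
      · exact hz
      · intro i _; apply Finset.sum_nonneg; intro k _; exact Complex.normSq_nonneg _
    have h2 : Complex.normSq (ψ (i, j, k)) = 0 := by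
      have := (Finset.sum_eq_zero_iff_of_nonneg
        (fun k _ => Complex.normSq_nonneg (ψ (i, j, k)))).mp
        (h1 i (Finset.mem_univ i)) k (Finset.mem_univ k)
      exact this
    have := Complex.normSq_eq_zero.mp h2
    rw [this]; simp
  -- LHS over filter equals sum over univ of product of sums
  have hLHS : (∑ j ∈ Finset.univ.filter (fun j => 0 < probB ψ j),
        probB ψ j * ((∑ k, |vVec ψ l j k|) * (∑ k, |vVec ψ m j k|)) : ℝ)
      = ∑ j : Fin dB, (∑ k, (ψ (l, j, k)).re) * (∑ k, (ψ (m, j, k)).re) := by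
    rw [Finset.sum_filter]
    apply Finset.sum_congr rfl
    intro j _
    by_cases hj : 0 < probB ψ j
    · rw [if_pos hj]
      have hs : 0 < Real.sqrt (probB ψ j) := Real.sqrt_pos.mpr hj
      have habs : ∀ i k, |vVec ψ i j k| = (ψ (i, j, k)).re / Real.sqrt (probB ψ j) := by
        intro i k
        rw [abs_of_nonneg]
        · rfl
        · exact div_nonneg (hpos (i, j, k)).1 hs.le
      simp only [habs]
      rw [← Finset.sum_div, ← Finset.sum_div]
      rw [div_mul_div_comm]
      rw [mul_div_assoc']
      rw [Real.mul_self_sqrt hj.le] at *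
      field_simp
    · rw [if_neg hj]
      have : (∑ k, (ψ (l, j, k)).re) = 0 := by
        apply Finset.sum_eq_zero; intro k _; exact hP0 j hj l k
      rw [this, zero_mul]
  rw [hLHS]
  -- RHS
  have hRHS : rhoA ψ l m * ∑ k : Fin dC, ∑ k' : Fin dC, rhoC ψ k k'
      = ∑ j : Fin dB, (∑ k, ψ (l, j, k)) * (∑ k', ψ (m, j, k')) := by
    rw [Finset.mul_sum]
    calc (∑ k : Fin dC, rhoA ψ l m * ∑ k' : Fin dC, rhoC ψ k k')
        = ∑ k : Fin dC, ∑ k' : Fin dC, rhoA ψ l m * rhoC ψ k k' := by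
          simp [Finset.mul_sum]
      _ = ∑ k : Fin dC, ∑ k' : Fin dC, rhoAC ψ (l, k) (m, k') := by
          apply Finset.sum_congr rfl; intro k _
          apply Finset.sum_congr rfl; intro k' _
          rw [hfac]; rfl
      _ = ∑ k : Fin dC, ∑ k' : Fin dC, ∑ j : Fin dB,
            ψ (l, j, k) * (starRingEnd ℂ) (ψ (m, j, k')) := rfl
      _ = ∑ j : Fin dB, (∑ k, ψ (l, j, k)) * (∑ k', ψ (m, j, k')) := by
          have h : ∀ j : Fin dB, (∑ k, ψ (l, j, k)) * (∑ k', ψ (m, j, k'))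
              = ∑ k : Fin dC, ∑ k' : Fin dC,
                  ψ (l, j, k) * (starRingEnd ℂ) (ψ (m, j, k')) := by
            intro j
            rw [Finset.sum_mul_sum]
            apply Finset.sum_congr rfl; intro k _
            apply Finset.sum_congr rfl; intro k' _
            congr 1
            rw [hre (m, j, k')]; simp
          simp only [h]
          have hswap : (∑ k : Fin dC, ∑ k' : Fin dC, ∑ j : Fin dB,
                ψ (l, j, k) * (starRingEnd ℂ) (ψ (m, j, k')))
              = ∑ k : Fin dC, ∑ j : Fin dB, ∑ k' : Fin dC,
                ψ (l, j, k) * (starRingEnd ℂ) (ψ (m, j, k')) :=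
            Finset.sum_congr rfl (fun k _ => by rw [Finset.sum_comm])
          rw [hswap, Finset.sum_comm]
  rw [hRHS]
  push_cast
  apply Finset.sum_congr rfl
  intro j _
  congr 1 <;> (apply Finset.sum_congr rfl; intro k _; exact (hre _).symm)
end

section
/- Let ρ_A be a 2×2 density matrix with non-negative real entries whose diagonal entries P_↑ = (ρ_A)_{0,0} and P_↓ = (ρ_A)_{1,1} are both nonzero, and let d_C be given. If the pair (d_C, t) with t = (ρ_A)_{0,1}/√(P_↑·P_↓) is feasible, then there exist a dimension d_B and a non-negative tripartite pure state ψ on systems A, B, C with local dimensions 2, d_B, d_C such that the reduced density matrix of ψ on A equals ρ_A, ρ_AC = ρ_A ⊗ ρ_C, and ρ_A(j) = ρ_A for every measurement outcome j on B with P_j > 0. -/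
open scoped BigOperators Kronecker
open scoped Classical ComplexOrder

/-- The pair `(d, t)` is feasible: there are entrywise non-negative unit vectors `v, w ∈ ℝ^d`
with inner product `t` and `2·|v|₁·|w|₁ ≤ t·(|v|₁² + |w|₁²)`. -/
def Feasible (d : ℕ) (t : ℝ) : Prop :=
  ∃ v w : Fin d → ℝ,
    (∀ k, 0 ≤ v k) ∧ (∀ k, 0 ≤ w k) ∧
    (∑ k, v k ^ 2) = 1 ∧ (∑ k, w k ^ 2) = 1 ∧
    (∑ k, v k * w k) = t ∧
    2 * (∑ k, |v k|) * (∑ k, |w k|) ≤ t * ((∑ k, |v k|) ^ 2 + (∑ k, |w k|) ^ 2)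

/-!
Write `ψ = a |0⟩ ⊗ A + b |1⟩ ⊗ B` with `a = √P↑`, `b = √P↓` and entrywise non-negative real
`dB × dC` matrices `A`, `B`. Then `ρ_AC = ρ_A ⊗ ρ_C` and `ρ_A(j) = ρ_A` hold as soon as
`BᵀB = AᵀA`, `AᵀB = t AᵀA`, and row by row `|B_j|² = |A_j|²`, `⟨A_j, B_j⟩ = t |A_j|²`.

Such `A`, `B` are obtained by taking as rows all coordinate permutations of a few pairs of vectors
`(V_i, W_i)`. Averaging over the symmetric group, a matrix is determined by its trace and by the
sum of its entries; the row conditions take care of the traces, so only the sums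
`Σ_i (Σ V_i)(Σ W_i)` and `Σ_i (Σ V_i)²` need to match. For the pairs `(v, w)` and `(w, v)` coming
from feasibility the mismatch has a sign, and a suitable multiple of a second pair lying strictly
on the other side of the feasibility inequality cancels it.
-/

open Matrix

lemma Equiv.Perm.exists_apply_eq_apply_eq {ι : Type*} [DecidableEq ι] {k k' l l' : ι}
    (hk : k ≠ k') (hl : l ≠ l') : ∃ τ : Equiv.Perm ι, τ k = l ∧ τ k' = l' := by
  set c := Equiv.swap k l k'
  have hc : c ≠ l := fun h => hk ((Equiv.swap k l).injective (h.trans (by simp)).symm)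
  refine ⟨Equiv.swap c l' * Equiv.swap k l, ?_, ?_⟩
  · simp [Equiv.swap_apply_of_ne_of_ne hc.symm hl]
  · simp [c]

section Symmetrize

variable {ι : Type*} [Fintype ι] [DecidableEq ι]

def symmetrize (M : Matrix ι ι ℝ) : Matrix ι ι ℝ :=
  ∑ σ : Equiv.Perm ι, M.submatrix σ σ

lemma symmetrize_apply (M : Matrix ι ι ℝ) (k k' : ι) :
    symmetrize M k k' = ∑ σ : Equiv.Perm ι, M (σ k) (σ k') := by
  simp [symmetrize, Matrix.sum_apply]

lemma symmetrize_sub (M N : Matrix ι ι ℝ) :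
    symmetrize (M - N) = symmetrize M - symmetrize N := by
  ext k k'
  simp [symmetrize_apply, Finset.sum_sub_distrib]

lemma symmetrize_smul (c : ℝ) (M : Matrix ι ι ℝ) : symmetrize (c • M) = c • symmetrize M := by
  ext k k'
  simp [symmetrize_apply, Finset.mul_sum]

lemma symmetrize_apply_perm (M : Matrix ι ι ℝ) (τ : Equiv.Perm ι) (k k' : ι) :
    symmetrize M (τ k) (τ k') = symmetrize M k k' := by
  simp only [symmetrize_apply]
  exact Fintype.sum_equiv (Equiv.mulRight τ) _ _ fun _ => rfl

lemma trace_symmetrize (M : Matrix ι ι ℝ) :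
    (symmetrize M).trace = Fintype.card (Equiv.Perm ι) * M.trace := by
  simp only [Matrix.trace, diag_apply, symmetrize_apply]
  rw [Finset.sum_comm]
  simp [Equiv.sum_comp _ fun k => M k k]

lemma sum_symmetrize (M : Matrix ι ι ℝ) :
    ∑ k, ∑ k', symmetrize M k k' = Fintype.card (Equiv.Perm ι) * ∑ a, ∑ b, M a b := by
  simp only [symmetrize_apply]
  rw [Finset.sum_congr rfl fun k _ => Finset.sum_comm, Finset.sum_comm]
  have h (σ : Equiv.Perm ι) : ∑ k, ∑ k', M (σ k) (σ k') = ∑ a, ∑ b, M a b := by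
    rw [← Equiv.sum_comp σ fun a => ∑ b, M a b]
    exact Finset.sum_congr rfl fun k _ => Equiv.sum_comp σ (M (σ k))
  simp [h]

/-- The symmetrization only depends on the trace and on the sum of all entries, because the
permutation group acts transitively on the diagonal and on the off-diagonal positions. -/
lemma symmetrize_eq_zero {M : Matrix ι ι ℝ} (htr : M.trace = 0)
    (hsum : ∑ a, ∑ b, M a b = 0) : symmetrize M = 0 := by
  have hdiag (k : ι) : symmetrize M k k = 0 := by
    have hconst (l : ι) : symmetrize M l l = symmetrize M k k := by
      simpa using (symmetrize_apply_perm M (Equiv.swap l k) l l).symm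
    have h := trace_symmetrize M
    rw [htr, mul_zero, Matrix.trace] at h
    simp only [diag_apply, hconst, Finset.sum_const, Finset.card_univ, nsmul_eq_mul] at h
    have : Nonempty ι := ⟨k⟩
    exact (mul_eq_zero.1 h).resolve_left (Nat.cast_ne_zero.2 Fintype.card_ne_zero)
  ext k k'
  rw [Matrix.zero_apply]
  by_cases hk : k = k'
  · rw [hk, hdiag]
  set c := symmetrize M k k'
  have hconst (l l' : ι) : symmetrize M l l' = c - if l = l' then c else 0 := by
    by_cases hl : l = l'
    · simp [hl, hdiag]
    · obtain ⟨τ, rfl, rfl⟩ := Equiv.Perm.exists_apply_eq_apply_eq hk hl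
      simp [hl, symmetrize_apply_perm, c]
  have h := sum_symmetrize M
  simp only [hsum, mul_zero, hconst, Finset.sum_sub_distrib] at h
  simp only [Finset.sum_const, Finset.card_univ, nsmul_eq_mul, Finset.sum_ite_eq,
    Finset.mem_univ, if_true] at h
  have hn : (1 : ℝ) < Fintype.card ι := by exact_mod_cast Fintype.one_lt_card_iff.2 ⟨k, k', hk⟩
  have hn' : (Fintype.card ι : ℝ) * (Fintype.card ι - 1) ≠ 0 :=
    (mul_pos (by linarith) (by linarith)).ne'
  exact (mul_eq_zero.1 (by linear_combination h)).resolve_left hn'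

lemma symmetrize_eq_symmetrize {M N : Matrix ι ι ℝ} (htr : M.trace = N.trace)
    (hsum : ∑ a, ∑ b, M a b = ∑ a, ∑ b, N a b) : symmetrize M = symmetrize N := by
  rw [← sub_eq_zero, ← symmetrize_sub]
  refine symmetrize_eq_zero (by rw [Matrix.trace_sub, htr, sub_self]) ?_
  simp [Finset.sum_sub_distrib, hsum]

end Symmetrize

section CorrelatedRows

variable {ι J : Type*} [Fintype ι] [Fintype J]

structure IsCorrelatedRows (t : ℝ) (A B : Matrix J ι ℝ) : Prop where
  nonneg_left : ∀ j k, 0 ≤ A j k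
  nonneg_right : ∀ j k, 0 ≤ B j k
  row_gram : ∀ j, (B * Bᵀ) j j = (A * Aᵀ) j j
  row_cross : ∀ j, (A * Bᵀ) j j = t * (A * Aᵀ) j j
  col_gram : Bᵀ * B = Aᵀ * A
  col_cross : Aᵀ * B = t • (Aᵀ * A)

lemma isCorrelatedRows_one_self {A : Matrix J ι ℝ} (hA : ∀ j k, 0 ≤ A j k) :
    IsCorrelatedRows 1 A A where
  nonneg_left := hA
  nonneg_right := hA
  row_gram _ := rfl
  row_cross _ := (one_mul _).symm
  col_gram := rfl
  col_cross := (one_smul _ _).symm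

namespace IsCorrelatedRows

variable {t : ℝ} {A B : Matrix J ι ℝ}

lemma smul (h : IsCorrelatedRows t A B) {c : ℝ} (hc : 0 ≤ c) :
    IsCorrelatedRows t (c • A) (c • B) where
  nonneg_left j k := mul_nonneg hc (h.nonneg_left j k)
  nonneg_right j k := mul_nonneg hc (h.nonneg_right j k)
  row_gram j := by simp [h.row_gram j]
  row_cross j := by
    simp only [transpose_smul, Matrix.mul_smul, smul_mul, Matrix.smul_apply, h.row_cross j,
      smul_eq_mul]
    ring
  col_gram := by simp [h.col_gram]
  col_cross := by simp [h.col_cross, smul_comm t c]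

lemma submatrix {J' : Type*} [Fintype J'] (h : IsCorrelatedRows t A B) (e : J' ≃ J) :
    IsCorrelatedRows t (A.submatrix e id) (B.submatrix e id) where
  nonneg_left j k := h.nonneg_left (e j) k
  nonneg_right j k := h.nonneg_right (e j) k
  row_gram j := h.row_gram (e j)
  row_cross j := h.row_cross (e j)
  col_gram := by simp [transpose_submatrix, submatrix_mul_equiv, h.col_gram]
  col_cross := by simp [transpose_submatrix, submatrix_mul_equiv, h.col_cross]

lemma exists_fin_normalized (h : IsCorrelatedRows t A B) (hpos : 0 < (A * Aᵀ).trace) :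
    ∃ (n : ℕ) (A' B' : Matrix (Fin n) ι ℝ), IsCorrelatedRows t A' B' ∧ (A' * A'ᵀ).trace = 1 := by
  set S := (A * Aᵀ).trace
  set e := (Fintype.equivFin J).symm
  refine ⟨_, _, _, (h.smul (by positivity : 0 ≤ (√S)⁻¹)).submatrix e, ?_⟩
  have hmul : ((√S)⁻¹ • A).submatrix e id * (((√S)⁻¹ • A).submatrix e id)ᵀ
      = (S⁻¹ • (A * Aᵀ)).submatrix e e := by
    rw [transpose_submatrix, ← submatrix_mul _ _ _ _ _ Function.bijective_id]
    simp [smul_smul, ← mul_inv, Real.mul_self_sqrt hpos.le]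
  rw [hmul]
  change ∑ j, (S⁻¹ • (A * Aᵀ)) (e j) (e j) = 1
  rw [Equiv.sum_comp e fun i => (S⁻¹ • (A * Aᵀ)) i i]
  simp only [Matrix.smul_apply, smul_eq_mul, ← Finset.mul_sum]
  exact inv_mul_cancel₀ hpos.ne'

end IsCorrelatedRows

end CorrelatedRows

section PermRows

lemma sum_sum_vecMulVec {ι I : Type*} [Fintype ι] [Fintype I] (V W : I → ι → ℝ) :
    ∑ a, ∑ b, (∑ i, vecMulVec (V i) (W i)) a b = ∑ i, (∑ k, V i k) * (∑ k, W i k) := by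
  simp only [Matrix.sum_apply, vecMulVec_apply, Finset.sum_mul_sum]
  rw [Finset.sum_congr rfl fun a _ => Finset.sum_comm, Finset.sum_comm]

def permRows {ι I : Type*} (V : I → ι → ℝ) : Matrix (I × Equiv.Perm ι) ι ℝ :=
  Matrix.of fun x k => V x.1 (x.2 k)

lemma permRows_mul_transpose_apply_self {ι I : Type*} [Fintype ι] (V W : I → ι → ℝ)
    (x : I × Equiv.Perm ι) : (permRows V * (permRows W)ᵀ) x x = V x.1 ⬝ᵥ W x.1 :=
  Equiv.sum_comp x.2 fun k => V x.1 k * W x.1 k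

variable {ι I : Type*} [Fintype ι] [DecidableEq ι] [Fintype I]

lemma transpose_permRows_mul_permRows (V W : I → ι → ℝ) :
    (permRows V)ᵀ * permRows W = symmetrize (∑ i, vecMulVec (V i) (W i)) := by
  ext k k'
  simp only [permRows, Matrix.mul_apply, symmetrize_apply, Matrix.sum_apply, vecMulVec_apply,
    Fintype.sum_prod_type, transpose_apply, of_apply]
  exact Finset.sum_comm

lemma trace_permRows_mul_transpose (V : I → ι → ℝ) :
    (permRows V * (permRows V)ᵀ).trace = Fintype.card (Equiv.Perm ι) * ∑ i, V i ⬝ᵥ V i := by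
  simp [Matrix.trace, permRows_mul_transpose_apply_self, Fintype.sum_prod_type, Finset.mul_sum]

lemma isCorrelatedRows_permRows {t : ℝ} {V W : I → ι → ℝ} (hV : ∀ i k, 0 ≤ V i k)
    (hW : ∀ i k, 0 ≤ W i k) (hself : ∀ i, W i ⬝ᵥ W i = V i ⬝ᵥ V i)
    (hinner : ∀ i, V i ⬝ᵥ W i = t * (V i ⬝ᵥ V i))
    (hsq : ∑ i, (∑ k, W i k) ^ 2 = ∑ i, (∑ k, V i k) ^ 2)
    (hmul : ∑ i, (∑ k, V i k) * (∑ k, W i k) = t * ∑ i, (∑ k, V i k) ^ 2) :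
    IsCorrelatedRows t (permRows V) (permRows W) where
  nonneg_left x k := hV x.1 (x.2 k)
  nonneg_right x k := hW x.1 (x.2 k)
  row_gram x := by simp only [permRows_mul_transpose_apply_self, hself]
  row_cross x := by simp only [permRows_mul_transpose_apply_self, hinner]
  col_gram := by
    rw [transpose_permRows_mul_permRows, transpose_permRows_mul_permRows]
    refine symmetrize_eq_symmetrize ?_ ?_
    · simp [Matrix.trace_sum, trace_vecMulVec, hself]
    · simpa only [sum_sum_vecMulVec, sq] using hsq
  col_cross := by
    rw [transpose_permRows_mul_permRows, transpose_permRows_mul_permRows, ← symmetrize_smul]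
    refine symmetrize_eq_symmetrize ?_ ?_
    · simp [Matrix.trace_sum, trace_vecMulVec, hinner, Finset.mul_sum]
    · simp only [Matrix.smul_apply, smul_eq_mul, ← Finset.mul_sum]
      simpa only [sum_sum_vecMulVec, sq] using hmul

end PermRows

lemma exists_correlated_pair {ι : Type*} [Fintype ι] [DecidableEq ι] [Nontrivial ι] {t : ℝ}
    (ht0 : 0 ≤ t) (ht1 : t ≤ 1) :
    ∃ x y : ι → ℝ, 0 ≤ x ∧ 0 ≤ y ∧ y ⬝ᵥ y = x ⬝ᵥ x ∧ x ⬝ᵥ y = t * (x ⬝ᵥ x) ∧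
      ∑ k, y k = ∑ k, x k ∧ 0 < ∑ k, x k := by
  obtain ⟨k₀, k₁, hk⟩ := exists_pair_ne ι
  -- `a` is a root of `a² - 2a + t² = 0`, i.e. `2 a t = t (a² + t²)`.
  set a := 1 + √(1 - t ^ 2)
  have ha : 1 ≤ a := le_add_of_nonneg_right (Real.sqrt_nonneg _)
  have hsq : √(1 - t ^ 2) ^ 2 = 1 - t ^ 2 := Real.sq_sqrt (by nlinarith)
  refine ⟨Pi.single k₀ a + Pi.single k₁ t, Pi.single k₀ t + Pi.single k₁ a,
    add_nonneg (Pi.single_nonneg.2 (by linarith)) (Pi.single_nonneg.2 ht0),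
    add_nonneg (Pi.single_nonneg.2 ht0) (Pi.single_nonneg.2 (by linarith)), ?_, ?_, ?_, ?_⟩
  · simp only [dotProduct_add, dotProduct_single, Pi.add_apply, Pi.single_eq_same,
      Pi.single_eq_of_ne hk, Pi.single_eq_of_ne hk.symm, add_zero, zero_add]
    ring
  · simp only [dotProduct_add, dotProduct_single, Pi.add_apply, Pi.single_eq_same,
      Pi.single_eq_of_ne hk, Pi.single_eq_of_ne hk.symm, add_zero, zero_add]
    linear_combination (-t) * hsq
  · simp only [Pi.add_apply, Finset.sum_add_distrib, Finset.sum_pi_single', Finset.mem_univ,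
      if_true]
    ring
  · simp only [Pi.add_apply, Finset.sum_add_distrib, Finset.sum_pi_single', Finset.mem_univ,
      if_true]
    linarith

lemma exists_isCorrelatedRows_of_lt_one {ι : Type*} [Fintype ι] [DecidableEq ι] [Nontrivial ι]
    {t : ℝ} {v w : ι → ℝ} (hv0 : ∀ k, 0 ≤ v k) (hw0 : ∀ k, 0 ≤ w k) (hv : v ⬝ᵥ v = 1)
    (hw : w ⬝ᵥ w = 1) (hvw : v ⬝ᵥ w = t)
    (hfeas : 2 * (∑ k, v k) * (∑ k, w k) ≤ t * ((∑ k, v k) ^ 2 + (∑ k, w k) ^ 2))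
    (ht0 : 0 ≤ t) (ht1 : t < 1) :
    ∃ (n : ℕ) (A B : Matrix (Fin n) ι ℝ), IsCorrelatedRows t A B ∧ (A * Aᵀ).trace = 1 := by
  obtain ⟨x, y, hx0, hy0, hyy, hxy, hsum, hpos⟩ := exists_correlated_pair (ι := ι) ht0 ht1.le
  set μ := ∑ k, v k
  set ν := ∑ k, w k
  set σ := ∑ k, x k
  -- `(s x, s y)` exceeds the feasibility inequality by exactly the slack of `(v, w)`.
  set s := √((t * (μ ^ 2 + ν ^ 2) - 2 * μ * ν) / (2 * (1 - t) * σ ^ 2))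
  have hs : s ^ 2 * (2 * (1 - t) * σ ^ 2) = t * (μ ^ 2 + ν ^ 2) - 2 * μ * ν := by
    have : 0 < 2 * (1 - t) * σ ^ 2 := by have := sub_pos.2 ht1; positivity
    rw [Real.sq_sqrt (div_nonneg (by linarith) this.le), div_mul_cancel₀ _ this.ne']
  have hs0 : 0 ≤ s := Real.sqrt_nonneg _
  have hxx : 0 ≤ x ⬝ᵥ x := Finset.sum_nonneg fun k _ => mul_self_nonneg (x k)
  refine (isCorrelatedRows_permRows (t := t) (V := ![v, w, s • x, s • y])
    (W := ![w, v, s • y, s • x]) ?_ ?_ ?_ ?_ ?_ ?_).exists_fin_normalized ?_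
  · intro i k
    fin_cases i <;> simp [hv0, hw0, mul_nonneg hs0 (hx0 k), mul_nonneg hs0 (hy0 k)]
  · intro i k
    fin_cases i <;> simp [hv0, hw0, mul_nonneg hs0 (hx0 k), mul_nonneg hs0 (hy0 k)]
  · intro i
    fin_cases i <;> simp [hv, hw, hyy]
  · intro i
    fin_cases i <;> simp [hv, hw, hvw, dotProduct_comm w v, hxy, dotProduct_comm y x, hyy] <;> ring
  · simp [Fin.sum_univ_four, ← Finset.mul_sum, hsum]
    ring
  · simp [Fin.sum_univ_four, ← Finset.mul_sum, hsum]
    linear_combination hs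
  · rw [trace_permRows_mul_transpose]
    simp [Fin.sum_univ_four, hv, hw, hyy]
    exact mul_pos (Nat.cast_pos.2 Fintype.card_pos) (by positivity)

lemma Feasible.exists_isCorrelatedRows {n : ℕ} {t : ℝ} (h : Feasible n t) :
    ∃ (dB : ℕ) (A B : Matrix (Fin dB) (Fin n) ℝ),
      IsCorrelatedRows t A B ∧ (A * Aᵀ).trace = 1 := by
  obtain ⟨v, w, hv0, hw0, hv, hw, hvw, hfeas⟩ := h
  simp only [abs_of_nonneg (hv0 _), abs_of_nonneg (hw0 _)] at hfeas
  have hvv : v ⬝ᵥ v = 1 := by simpa [dotProduct, sq] using hv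
  have hww : w ⬝ᵥ w = 1 := by simpa [dotProduct, sq] using hw
  have ht0 : 0 ≤ t := hvw ▸ Finset.sum_nonneg fun k _ => mul_nonneg (hv0 k) (hw0 k)
  have ht1 : t ≤ 1 := by
    have := Finset.sum_mul_sq_le_sq_mul_sq Finset.univ v w
    rw [hv, hw, hvw] at this
    nlinarith
  rcases ht1.lt_or_eq with ht1 | rfl
  · have : Nontrivial (Fin n) := by
      by_contra hn
      rw [not_nontrivial_iff_subsingleton] at hn
      obtain ⟨k⟩ : Nonempty (Fin n) := by
        by_contra he
        rw [not_nonempty_iff] at he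
        simp at hv
      simp only [Fintype.sum_subsingleton _ k] at hv hw hvw
      nlinarith [mul_nonneg (hv0 k) (hw0 k)]
    exact exists_isCorrelatedRows_of_lt_one hv0 hw0 hvv hww hvw hfeas ht0 ht1
  · exact ⟨1, Matrix.of fun _ => v, _, isCorrelatedRows_one_self fun _ => hv0,
    by rw [Matrix.trace, Fin.sum_univ_one]; exact hvv⟩

section RealState

variable {dA dB dC : ℕ}

def realState (φ : Fin dA → Matrix (Fin dB) (Fin dC) ℝ) : Fin dA × Fin dB × Fin dC → ℂ :=
  fun x => (φ x.1 x.2.1 x.2.2 : ℂ)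

lemma rhoA_realState (φ : Fin dA → Matrix (Fin dB) (Fin dC) ℝ) (i i' : Fin dA) :
    rhoA (realState φ) i i' = ((φ i * (φ i')ᵀ).trace : ℂ) := by
  simp [rhoA, realState, Matrix.trace, Matrix.mul_apply]

lemma rhoC_realState (φ : Fin dA → Matrix (Fin dB) (Fin dC) ℝ) (k k' : Fin dC) :
    rhoC (realState φ) k k' = (∑ i, ((φ i)ᵀ * φ i) k k' : ℝ) := by
  simp [rhoC, realState, Matrix.mul_apply]

lemma rhoAC_realState (φ : Fin dA → Matrix (Fin dB) (Fin dC) ℝ) (x y : Fin dA × Fin dC) :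
    rhoAC (realState φ) x y = (((φ x.1)ᵀ * φ y.1) x.2 y.2 : ℝ) := by
  simp [rhoAC, realState, Matrix.mul_apply]

lemma probB_realState (φ : Fin dA → Matrix (Fin dB) (Fin dC) ℝ) (j : Fin dB) :
    probB (realState φ) j = ∑ i, (φ i * (φ i)ᵀ) j j := by
  simp [probB, realState, Matrix.mul_apply, Complex.normSq_ofReal]

lemma rhoAPost_realState (φ : Fin dA → Matrix (Fin dB) (Fin dC) ℝ) (j : Fin dB) (i i' : Fin dA) :
    rhoAPost (realState φ) j i i' = (probB (realState φ) j : ℂ)⁻¹ * ((φ i * (φ i')ᵀ) j j : ℝ) := by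
  simp [rhoAPost, realState, Matrix.mul_apply]

lemma normalized_realState_iff (φ : Fin dA → Matrix (Fin dB) (Fin dC) ℝ) :
    Normalized (realState φ) ↔ ∑ i, (φ i * (φ i)ᵀ).trace = 1 := by
  simp [Normalized, realState, Matrix.trace, Matrix.mul_apply, Complex.normSq_ofReal]

lemma nonNeg_realState {φ : Fin dA → Matrix (Fin dB) (Fin dC) ℝ} (h : ∀ i j k, 0 ≤ φ i j k) :
    NonNeg (realState φ) :=
  fun x => ⟨h x.1 x.2.1 x.2.2, Complex.ofReal_im _⟩

end RealState

section Factorization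

variable {dA dB dC : ℕ} {φ : Fin dA → Matrix (Fin dB) (Fin dC) ℝ}
  {R : Matrix (Fin dA) (Fin dA) ℝ} {G : Matrix (Fin dC) (Fin dC) ℝ} {N : Fin dB → ℝ}

lemma rhoA_realState_eq (hrow : ∀ i i' j, (φ i * (φ i')ᵀ) j j = R i i' * N j)
    (hN : ∑ j, N j = 1) : rhoA (realState φ) = R.map (↑) := by
  ext i i'
  simp [rhoA_realState, Matrix.trace, hrow, ← Finset.mul_sum, hN]

lemma rhoC_realState_eq (hcol : ∀ i i', (φ i)ᵀ * φ i' = R i i' • G) (hR : R.trace = 1) :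
    rhoC (realState φ) = G.map (↑) := by
  have hR' : ∑ i, (R i i : ℂ) = 1 := by exact_mod_cast hR
  ext k k'
  simp [rhoC_realState, hcol, ← Finset.sum_mul, hR']

lemma rhoAC_realState_eq_kronecker (hrow : ∀ i i' j, (φ i * (φ i')ᵀ) j j = R i i' * N j)
    (hcol : ∀ i i', (φ i)ᵀ * φ i' = R i i' • G) (hR : R.trace = 1) (hN : ∑ j, N j = 1) :
    rhoAC (realState φ) = rhoA (realState φ) ⊗ₖ rhoC (realState φ) := by
  ext x y
  simp [rhoAC_realState, rhoA_realState_eq hrow hN, rhoC_realState_eq hcol hR, hcol]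

lemma probB_realState_eq (hrow : ∀ i i' j, (φ i * (φ i')ᵀ) j j = R i i' * N j)
    (hR : R.trace = 1) (j : Fin dB) : probB (realState φ) j = N j := by
  have hR' : ∑ i, R i i = 1 := hR
  simp [probB_realState, hrow, ← Finset.sum_mul, hR']

lemma rhoAPost_realState_eq (hrow : ∀ i i' j, (φ i * (φ i')ᵀ) j j = R i i' * N j)
    (hR : R.trace = 1) (hN : ∑ j, N j = 1) {j : Fin dB} (hj : 0 < probB (realState φ) j) :
    rhoAPost (realState φ) j = rhoA (realState φ) := by
  rw [probB_realState_eq hrow hR] at hj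
  have hNj : (N j : ℂ) ≠ 0 := by exact_mod_cast hj.ne'
  ext i i'
  simp only [rhoAPost_realState, probB_realState_eq hrow hR, rhoA_realState_eq hrow hN, hrow,
    Matrix.map_apply, Complex.ofReal_mul]
  field_simp

lemma normalized_realState (hrow : ∀ i i' j, (φ i * (φ i')ᵀ) j j = R i i' * N j)
    (hR : R.trace = 1) (hN : ∑ j, N j = 1) : Normalized (realState φ) := by
  have hR' : ∑ i, R i i = 1 := hR
  simp [normalized_realState_iff, Matrix.trace, hrow, ← Finset.mul_sum, hN, hR']

end Factorization

lemma exists_state_of_isCorrelatedRows {dB dC : ℕ} {t a b : ℝ} {A B : Matrix (Fin dB) (Fin dC) ℝ}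
    (hAB : IsCorrelatedRows t A B) (hA : (A * Aᵀ).trace = 1) (ha : 0 ≤ a) (hb : 0 ≤ b)
    (hab : a ^ 2 + b ^ 2 = 1) :
    ∃ ψ : Fin 2 × Fin dB × Fin dC → ℂ, Normalized ψ ∧ NonNeg ψ ∧
      rhoA ψ = (!![a ^ 2, t * a * b; t * a * b, b ^ 2]).map (↑) ∧
      rhoAC ψ = rhoA ψ ⊗ₖ rhoC ψ ∧ ∀ j, 0 < probB ψ j → rhoAPost ψ j = rhoA ψ := by
  set R : Matrix (Fin 2) (Fin 2) ℝ := !![a ^ 2, t * a * b; t * a * b, b ^ 2]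
  set φ : Fin 2 → Matrix (Fin dB) (Fin dC) ℝ := ![a • A, b • B]
  have hcol_BA : Bᵀ * A = t • (Aᵀ * A) := by
    rw [← transpose_transpose (Bᵀ * A), transpose_mul, transpose_transpose, hAB.col_cross,
      transpose_smul, transpose_mul, transpose_transpose]
  have hrow_BA (j : Fin dB) : (B * Aᵀ) j j = t * (A * Aᵀ) j j := by
    rw [← hAB.row_cross j, ← transpose_apply (B * Aᵀ), transpose_mul, transpose_transpose]
  have hrow : ∀ i i' j, (φ i * (φ i')ᵀ) j j = R i i' * (A * Aᵀ) j j := by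
    intro i i' j
    fin_cases i <;> fin_cases i' <;>
      simp [φ, R, hAB.row_gram j, hrow_BA j, hAB.row_cross j] <;> ring
  have hcol : ∀ i i', (φ i)ᵀ * φ i' = R i i' • (Aᵀ * A) := by
    intro i i'
    fin_cases i <;> fin_cases i' <;>
      simp [φ, R, hAB.col_gram, hcol_BA, hAB.col_cross, smul_smul] <;> ring_nf
  have hR : R.trace = 1 := by simp [R, Matrix.trace, Fin.sum_univ_two, hab]
  refine ⟨realState φ, normalized_realState hrow hR hA, nonNeg_realState ?_,
    rhoA_realState_eq hrow hA, rhoAC_realState_eq_kronecker hrow hcol hR hA,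
    fun j hj => rhoAPost_realState_eq hrow hR hA hj⟩
  intro i j k
  fin_cases i
  · exact mul_nonneg ha (hAB.nonneg_left j k)
  · exact mul_nonneg hb (hAB.nonneg_right j k)

lemma Matrix.eq_map_ofReal_of_isHermitian {ρ : Matrix (Fin 2) (Fin 2) ℂ} (hρ : ρ.IsHermitian)
    (him : ∀ i j, (ρ i j).im = 0) :
    ρ = (!![(ρ 0 0).re, (ρ 0 1).re; (ρ 0 1).re, (ρ 1 1).re]).map (↑) := by
  have h10 : ρ 1 0 = star (ρ 0 1) := (hρ.apply 1 0).symm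
  ext i j
  fin_cases i <;> fin_cases j <;> apply Complex.ext <;> simp [him, h10]

theorem stmt5 (dC : ℕ) (ρ : Matrix (Fin 2) (Fin 2) ℂ)
    (hpsd : ρ.PosSemidef) (htr : ρ.trace = 1)
    (hentries : ∀ i j, 0 ≤ (ρ i j).re ∧ (ρ i j).im = 0)
    (hup : (ρ 0 0).re ≠ 0) (hdown : (ρ 1 1).re ≠ 0)
    (hfeas : Feasible dC ((ρ 0 1).re / Real.sqrt ((ρ 0 0).re * (ρ 1 1).re))) :
    ∃ (dB : ℕ) (ψ : Fin 2 × Fin dB × Fin dC → ℂ),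
      Normalized ψ ∧ NonNeg ψ ∧
      rhoA ψ = ρ ∧
      rhoAC ψ = rhoA ψ ⊗ₖ rhoC ψ ∧
      ∀ j : Fin dB, 0 < probB ψ j → rhoAPost ψ j = rhoA ψ := by
  set p := (ρ 0 0).re
  set q := (ρ 1 1).re
  set t := (ρ 0 1).re / √(p * q)
  have hp : 0 < p := (hentries 0 0).1.lt_of_ne' hup
  have hq : 0 < q := (hentries 1 1).1.lt_of_ne' hdown
  have hpq : p + q = 1 := by simpa [Matrix.trace, Fin.sum_univ_two] using congrArg Complex.re htr
  have hr : (ρ 0 1).re = t * √p * √q := by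
    rw [mul_assoc, ← Real.sqrt_mul hp.le, div_mul_cancel₀ _ (by positivity)]
  obtain ⟨dB, A, B, hAB, hA⟩ := hfeas.exists_isCorrelatedRows
  obtain ⟨ψ, hnorm, hnonneg, hρA, hAC, hpost⟩ := exists_state_of_isCorrelatedRows hAB hA
    (Real.sqrt_nonneg p) (Real.sqrt_nonneg q) (by rw [Real.sq_sqrt hp.le, Real.sq_sqrt hq.le, hpq])
  refine ⟨dB, ψ, hnorm, hnonneg, ?_, hAC, hpost⟩
  rw [hρA, Real.sq_sqrt hp.le, Real.sq_sqrt hq.le, ← hr]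
  exact (Matrix.eq_map_ofReal_of_isHermitian hpsd.1 fun i j => (hentries i j).2).symm
end

section
/- Let P be an n×n real matrix with Pᵀ = P, P² = P, and all entries non-negative. Then there exist finitely many unit vectors v_1, …, v_r ∈ ℝⁿ, each with all entries non-negative and with pairwise disjoint supports (i.e., for a ≠ b there is no coordinate i with (v_a)_i ≠ 0 and (v_b)_i ≠ 0), such that P = Σ_{a=1}^{r} v_a v_aᵀ. -/
/-!
Since `P = P * P` has non-negative entries, `P i j * P j k ≤ P i k`, so `P i j ≠ 0` is a
transitive relation; it is symmetric, and `P i i = ∑ k, P i k ^ 2` makes it reflexive exactly off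
the zero rows. Hence `P` is block diagonal with entrywise positive blocks, and a Perron–Frobenius
argument shows that each block has rank one: `P i j ^ 2 = P i i * P j j`. The block on a class `c`
is therefore `v vᵀ` with `v k = √(P k k)` for `k ∈ c`.
-/

open Finset

namespace Matrix

section Semiring

variable {ι R : Type*} [Fintype ι] [Semiring R] {P : Matrix ι ι R}

lemma apply_eq_sum_of_isIdempotentElem (hP : IsIdempotentElem P) (i j : ι) :
    P i j = ∑ k, P i k * P k j := by
  rw [← mul_apply, hP.eq]

lemma diag_eq_sum_sq (hS : P.IsSymm) (hP : IsIdempotentElem P) (i : ι) :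
    P i i = ∑ k, P i k ^ 2 := by
  rw [apply_eq_sum_of_isIdempotentElem hP]
  exact sum_congr rfl fun k _ => by rw [hS.apply, sq]

end Semiring

section OrderedField

variable {ι 𝕜 : Type*} [Fintype ι] [Field 𝕜] [LinearOrder 𝕜] [IsStrictOrderedRing 𝕜]
  {P : Matrix ι ι 𝕜}

lemma apply_eq_zero_of_diag_eq_zero (hS : P.IsSymm) (hP : IsIdempotentElem P) {i : ι}
    (hi : P i i = 0) (j : ι) : P i j = 0 := by
  rw [diag_eq_sum_sq hS hP, sum_eq_zero_iff_of_nonneg fun k _ => sq_nonneg _] at hi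
  exact pow_eq_zero_iff two_ne_zero |>.1 (hi j (mem_univ j))

lemma diag_ne_zero_of_apply_ne_zero (hS : P.IsSymm) (hP : IsIdempotentElem P) {i j : ι}
    (hij : P i j ≠ 0) : P i i ≠ 0 :=
  fun hi => hij (apply_eq_zero_of_diag_eq_zero hS hP hi j)

lemma mul_le_of_isIdempotentElem (hP : IsIdempotentElem P) (hP0 : ∀ i j, 0 ≤ P i j)
    (i j k : ι) : P i j * P j k ≤ P i k := by
  rw [apply_eq_sum_of_isIdempotentElem hP i k]
  exact single_le_sum (f := fun m => P i m * P m k)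
    (fun m _ => mul_nonneg (hP0 i m) (hP0 m k)) (mem_univ j)

lemma apply_ne_zero_trans (hP : IsIdempotentElem P) (hP0 : ∀ i j, 0 ≤ P i j) {i j k : ι}
    (hij : P i j ≠ 0) (hjk : P j k ≠ 0) : P i k ≠ 0 := by
  exact (lt_of_lt_of_le (mul_pos ((hP0 i j).lt_of_ne' hij) ((hP0 j k).lt_of_ne' hjk))
    (mul_le_of_isIdempotentElem hP hP0 i j k)).ne'

lemma eq_zero_of_mulVec_eq_self (hP0 : ∀ i j, 0 ≤ P i j) {w : ι → 𝕜} (hw0 : ∀ k, 0 ≤ w k)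
    (hw : P *ᵥ w = w) {k m : ι} (hk : w k = 0) (hkm : P k m ≠ 0) : w m = 0 := by
  rw [← hw, mulVec, dotProduct,
    sum_eq_zero_iff_of_nonneg fun m _ => mul_nonneg (hP0 k m) (hw0 m)] at hk
  exact (mul_eq_zero.1 (hk m (mem_univ m))).resolve_left hkm

/-- A Perron–Frobenius argument: subtracting from column `i` the largest multiple of column `j`
that stays non-negative leaves a non-negative fixed vector of `P` with a zero on the support of
column `j`, hence zero there, while both columns vanish off that support. -/
lemma exists_col_eq_smul_col (hS : P.IsSymm) (hP : IsIdempotentElem P)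
    (hP0 : ∀ i j, 0 ≤ P i j) {i j : ι} (hij : P i j ≠ 0) : ∃ c : 𝕜, ∀ k, P k i = c * P k j := by
  classical
  have hjj : P j j ≠ 0 := diag_ne_zero_of_apply_ne_zero hS hP (hS.apply i j ▸ hij)
  obtain ⟨k₀, hk₀, hmin⟩ := exists_min_image (univ.filter fun k => P j k ≠ 0)
    (fun k => P k i / P k j) ⟨j, by simpa using hjj⟩
  simp only [mem_filter, mem_univ, true_and] at hk₀ hmin
  set c := P k₀ i / P k₀ j
  set w : ι → 𝕜 := fun k => P k i - c * P k j
  have hw0 : ∀ k, 0 ≤ w k := by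
    intro k
    by_cases hk : P j k = 0
    · simpa [w, hS.apply j k ▸ hk] using hP0 k i
    · have hkj : 0 < P k j := (hP0 k j).lt_of_ne' (hS.apply k j ▸ hk)
      simpa [w, sub_nonneg, ← le_div_iff₀ hkj] using hmin k hk
  have hw : P *ᵥ w = w := by
    ext k
    simp only [w, mulVec, dotProduct, mul_sub, sum_sub_distrib, mul_left_comm _ c, ← mul_sum,
      ← apply_eq_sum_of_isIdempotentElem hP]
  have hwk₀ : w k₀ = 0 := by
    simp [w, c, div_mul_cancel₀ _ (hS.apply k₀ j ▸ hk₀ : P k₀ j ≠ 0)]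
  refine ⟨c, fun k => ?_⟩
  by_cases hk : P j k = 0
  · have hkj : P k j = 0 := hS.apply j k ▸ hk
    have hki : P k i = 0 := by
      by_contra hki
      exact apply_ne_zero_trans hP hP0 hki hij hkj
    simp [hki, hkj]
  · exact sub_eq_zero.1 <| eq_zero_of_mulVec_eq_self hP0 hw0 hw hwk₀
      (apply_ne_zero_trans hP hP0 (hS.apply j k₀ ▸ hk₀) hk)

lemma apply_sq_eq_diag_mul_diag (hS : P.IsSymm) (hP : IsIdempotentElem P)
    (hP0 : ∀ i j, 0 ≤ P i j) {i j : ι} (hij : P i j ≠ 0) : P i j ^ 2 = P i i * P j j := by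
  obtain ⟨c, hc⟩ := exists_col_eq_smul_col hS hP hP0 hij
  rw [hc i, sq, ← hS.apply i j, hc j]
  ring

end OrderedField

section Real

variable {ι : Type*} {P : Matrix ι ι ℝ}

noncomputable def sqrtDiagOn [DecidableEq ι] (P : Matrix ι ι ℝ) (s : Finset ι) (k : ι) : ℝ :=
  if k ∈ s then √(P k k) else 0

lemma sqrtDiagOn_nonneg [DecidableEq ι] (s : Finset ι) (k : ι) : 0 ≤ sqrtDiagOn P s k := by
  unfold sqrtDiagOn
  split_ifs <;> positivity

variable [Fintype ι]

noncomputable def rowSupport (P : Matrix ι ι ℝ) (i : ι) : Finset ι :=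
  univ.filter fun k => P i k ≠ 0

@[simp]
lemma mem_rowSupport {i k : ι} : k ∈ rowSupport P i ↔ P i k ≠ 0 := by
  simp [rowSupport]

lemma rowSupport_eq_of_apply_ne_zero (hS : P.IsSymm) (hP : IsIdempotentElem P)
    (hP0 : ∀ i j, 0 ≤ P i j) {i j : ι} (hij : P i j ≠ 0) : rowSupport P i = rowSupport P j := by
  ext k
  simp only [mem_rowSupport]
  exact ⟨apply_ne_zero_trans hP hP0 (hS.apply i j ▸ hij), apply_ne_zero_trans hP hP0 hij⟩

variable [DecidableEq ι]

noncomputable def supportClasses (P : Matrix ι ι ℝ) : Finset (Finset ι) :=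
  (univ.filter fun i => P i i ≠ 0).image (rowSupport P)

lemma eq_rowSupport_of_mem_supportClasses (hS : P.IsSymm) (hP : IsIdempotentElem P)
    (hP0 : ∀ i j, 0 ≤ P i j) {c : Finset ι} (hc : c ∈ supportClasses P) {k : ι} (hk : k ∈ c) :
    c = rowSupport P k := by
  obtain ⟨t, -, rfl⟩ := mem_image.1 hc
  exact rowSupport_eq_of_apply_ne_zero hS hP hP0 (mem_rowSupport.1 hk)

lemma mem_supportClasses_and_mem_iff (hS : P.IsSymm) (hP : IsIdempotentElem P)
    (hP0 : ∀ i j, 0 ≤ P i j) (c : Finset ι) (i j : ι) :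
    (c ∈ supportClasses P ∧ i ∈ c ∧ j ∈ c) ↔ (c = rowSupport P i ∧ P i j ≠ 0) := by
  constructor
  · rintro ⟨hc, hi, hj⟩
    obtain rfl := eq_rowSupport_of_mem_supportClasses hS hP hP0 hc hi
    exact ⟨rfl, mem_rowSupport.1 hj⟩
  · rintro ⟨rfl, hij⟩
    have hii := diag_ne_zero_of_apply_ne_zero hS hP hij
    exact ⟨mem_image_of_mem _ (by simpa using hii), mem_rowSupport.2 hii, mem_rowSupport.2 hij⟩

lemma eq_of_sqrtDiagOn_ne_zero (hS : P.IsSymm) (hP : IsIdempotentElem P)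
    (hP0 : ∀ i j, 0 ≤ P i j) {c c' : Finset ι} (hc : c ∈ supportClasses P)
    (hc' : c' ∈ supportClasses P) {k : ι} (hk : sqrtDiagOn P c k ≠ 0)
    (hk' : sqrtDiagOn P c' k ≠ 0) : c = c' := by
  have hmem : ∀ {s : Finset ι}, sqrtDiagOn P s k ≠ 0 → k ∈ s := fun h => by
    by_contra hks
    exact h (if_neg hks)
  rw [eq_rowSupport_of_mem_supportClasses hS hP hP0 hc (hmem hk),
    eq_rowSupport_of_mem_supportClasses hS hP hP0 hc' (hmem hk')]

lemma sum_sq_sqrtDiagOn (hS : P.IsSymm) (hP : IsIdempotentElem P) (hP0 : ∀ i j, 0 ≤ P i j)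
    {c : Finset ι} (hc : c ∈ supportClasses P) : ∑ k, sqrtDiagOn P c k ^ 2 = 1 := by
  obtain ⟨t, ht, rfl⟩ := mem_image.1 hc
  have htt : P t t ≠ 0 := (mem_filter.1 ht).2
  have hdiag : ∀ k, sqrtDiagOn P (rowSupport P t) k ^ 2 = P t k ^ 2 / P t t := by
    intro k
    by_cases htk : P t k = 0
    · simp [sqrtDiagOn, htk]
    · rw [sqrtDiagOn, if_pos (mem_rowSupport.2 htk), Real.sq_sqrt (hP0 k k),
        apply_sq_eq_diag_mul_diag hS hP hP0 htk, mul_div_cancel_left₀ _ htt]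
  simp only [hdiag, ← sum_div, ← diag_eq_sum_sq hS hP, div_self htt]

lemma sum_vecMulVec_sqrtDiagOn (hS : P.IsSymm) (hP : IsIdempotentElem P)
    (hP0 : ∀ i j, 0 ≤ P i j) :
    ∑ c ∈ supportClasses P, vecMulVec (sqrtDiagOn P c) (sqrtDiagOn P c) = P := by
  ext i j
  rw [sum_apply]
  have hclass := mem_supportClasses_and_mem_iff hS hP hP0 (i := i) (j := j)
  have hoff : ∀ c ∈ supportClasses P, ¬(c = rowSupport P i ∧ P i j ≠ 0) →
      vecMulVec (sqrtDiagOn P c) (sqrtDiagOn P c) i j = 0 := by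
    intro c hc hne
    by_cases hi : i ∈ c
    · have hj : j ∉ c := fun hj => hne ((hclass c).1 ⟨hc, hi, hj⟩)
      simp [vecMulVec_apply, sqrtDiagOn, hj]
    · simp [vecMulVec_apply, sqrtDiagOn, hi]
  by_cases hij : P i j = 0
  · rw [hij]
    exact sum_eq_zero fun c hc => hoff c hc fun h => h.2 hij
  · obtain ⟨hc, hi, hj⟩ := (hclass _).2 ⟨rfl, hij⟩
    rw [sum_eq_single_of_mem _ hc fun c hc hne => hoff c hc fun h => hne h.1]
    rw [vecMulVec_apply, sqrtDiagOn, sqrtDiagOn, if_pos hi, if_pos hj, ← Real.sqrt_mul (hP0 i i),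
      ← apply_sq_eq_diag_mul_diag hS hP hP0 hij, Real.sqrt_sq (hP0 i j)]

end Real

end Matrix

open Matrix

open scoped BigOperators

/-- A real orthogonal projection matrix with non-negative entries is a sum of outer
products of entrywise non-negative unit vectors with pairwise disjoint supports. -/
theorem stmt7 {n : ℕ} (P : Matrix (Fin n) (Fin n) ℝ)
    (hsymm : Pᵀ = P) (hidem : P * P = P) (hpos : ∀ i j, 0 ≤ P i j) :
    ∃ (r : ℕ) (v : Fin r → Fin n → ℝ),
      (∀ a, ∑ i, v a i ^ 2 = 1) ∧
      (∀ a i, 0 ≤ v a i) ∧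
      (∀ a b, a ≠ b → ∀ i, ¬(v a i ≠ 0 ∧ v b i ≠ 0)) ∧
      P = ∑ a, Matrix.vecMulVec (v a) (v a) := by
  let e := Fintype.equivFin (supportClasses P)
  refine ⟨_, fun a => sqrtDiagOn P (e.symm a), fun a => sum_sq_sqrtDiagOn hsymm hidem hpos
    (e.symm a).2, fun a => sqrtDiagOn_nonneg _, fun a b hab i hi => hab ?_, ?_⟩
  · exact e.symm.injective (Subtype.ext
      (eq_of_sqrtDiagOn_ne_zero hsymm hidem hpos (e.symm a).2 (e.symm b).2 hi.1 hi.2))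
  · rw [e.symm.sum_comp fun c => vecMulVec (sqrtDiagOn P c) (sqrtDiagOn P c)]
    exact (sum_vecMulVec_sqrtDiagOn hsymm hidem hpos).symm.trans (sum_coe_sort _ _).symm
end

section
/- Let v, w ∈ ℝ² be vectors with non-negative entries and ‖v‖₂ = ‖w‖₂ = 1. If 2·|v|₁·|w|₁ ≤ ⟨v, w⟩·(|v|₁² + |w|₁²), then v = w. -/
open scoped BigOperators

theorem stmt13 (v w : Fin 2 → ℝ)
    (hv : ∀ k, 0 ≤ v k) (hw : ∀ k, 0 ≤ w k)
    (hv2 : ∑ k, v k ^ 2 = 1) (hw2 : ∑ k, w k ^ 2 = 1)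
    (h : 2 * (∑ k, |v k|) * (∑ k, |w k|) ≤
        (∑ k, v k * w k) * ((∑ k, |v k|) ^ 2 + (∑ k, |w k|) ^ 2)) :
    v = w := by
  simp only [Fin.sum_univ_two, abs_of_nonneg (hv 0), abs_of_nonneg (hv 1),
    abs_of_nonneg (hw 0), abs_of_nonneg (hw 1)] at hv2 hw2 h
  have hp := hv 0; have hq := hv 1; have hr := hw 0; have ht := hw 1
  set p := v 0; set q := v 1; set r := w 0; set t := w 1
  have e1 : 2*(p+q)*(r+t) = 2*(p*r+q*t) + 2*(p*t+q*r) := by ring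
  have e2 : (p*r+q*t)*((p+q)^2+(r+t)^2) = 2*(p*r+q*t) + 2*((p*r+q*t)*(p*q+r*t)) := by
    linear_combination (p*r+q*t)*hv2 + (p*r+q*t)*hw2
  have h' : p*t+q*r ≤ (p*r+q*t)*(p*q+r*t) := by linarith
  have hid : (p^2-r^2)*(p*t-q*r) = (p*t+q*r) - (p*r+q*t)*(p*q+r*t) := by
    linear_combination (p*t)*hv2 + (q*r)*hw2
  have h1 : (p^2-r^2)*(p*t-q*r) ≤ 0 := by linarith
  have hpt : 0 ≤ p*t+q*r := by positivity
  have hsq : (p^2-r^2)^2 = ((p^2-r^2)*(p*t-q*r))*(p*t+q*r) := by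
    linear_combination (p^2-r^2)*r^2*hv2 - (p^2-r^2)*p^2*hw2
  have hle : (p^2-r^2)^2 ≤ 0 := by
    rw [hsq]; exact mul_nonpos_of_nonpos_of_nonneg h1 hpt
  have hD : p^2 - r^2 = 0 := by
    have := le_antisymm hle (sq_nonneg _)
    exact pow_eq_zero_iff (by norm_num) |>.mp this
  have hpr : p = r := by
    have hm : (p-r)*(p+r) = 0 := by linear_combination hD
    rcases mul_eq_zero.mp hm with h0 | h0
    · linarith
    · have : p = 0 := by linarith
      have : r = 0 := by linarith
      linarith
  have hqt : q = t := by
    have hq2 : q^2 - t^2 = 0 := by linarith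
    have hm : (q-t)*(q+t) = 0 := by linear_combination hq2
    rcases mul_eq_zero.mp hm with h0 | h0
    · linarith
    · have : q = 0 := by linarith
      have : t = 0 := by linarith
      linarith
  funext k
  fin_cases k
  · exact hpr
  · exact hqt
end

section
/- For every ε > 0 there exist a dimension d and vectors v, w ∈ ℝ^d with non-negative entries, ‖v‖₂ = ‖w‖₂ = 1, 0 < ⟨v, w⟩ ≤ ε, and 2·|v|₁·|w|₁ ≤ ⟨v, w⟩·(|v|₁² + |w|₁²). In other words, the inner products for which the feasibility inequality can be achieved tend to zero as the dimension grows. -/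
open scoped BigOperators

/-!
Take `v = e₀` and `w = (δ, c, …, c) ∈ ℝ^{n+1}` with `c = √((1 - δ²)/n)`, so that `⟨v, w⟩ = δ`
while `|w|₁ ≥ √(n (1 - δ²))` grows with `n`. Once `δ |w|₁ ≥ 2`, the inequality
`2 |w|₁ ≤ δ (1 + |w|₁²)` follows from `2 |w|₁ ≤ δ |w|₁²`.
-/

lemma two_mul_le_mul_sq_add_sq {a b t : ℝ} (hb : 0 ≤ b) (ht : 0 ≤ t)
    (hab : 2 * a ≤ t * b) : 2 * a * b ≤ t * (a ^ 2 + b ^ 2) := by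
  nlinarith [mul_le_mul_of_nonneg_right hab hb, mul_nonneg ht (sq_nonneg a)]

lemma exists_nonneg_unit_vector_head_eq_sq_l1_ge {δ : ℝ} (hδ0 : 0 ≤ δ) (hδ1 : δ ≤ 1) {n : ℕ}
    (hn : 0 < n) :
    ∃ w : Fin (n + 1) → ℝ, (∀ k, 0 ≤ w k) ∧ ∑ k, w k ^ 2 = 1 ∧ w 0 = δ ∧
      n * (1 - δ ^ 2) ≤ (∑ k, |w k|) ^ 2 := by
  set c := Real.sqrt ((1 - δ ^ 2) / n)
  have hc0 : 0 ≤ c := Real.sqrt_nonneg _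
  have hδ2 : 0 ≤ 1 - δ ^ 2 := by nlinarith
  have hc2 : c ^ 2 = (1 - δ ^ 2) / n := Real.sq_sqrt (by positivity)
  have hn' : (n : ℝ) ≠ 0 := by positivity
  refine ⟨Fin.cons δ fun _ => c, fun k => Fin.cases hδ0 (fun _ => hc0) k, ?_, rfl, ?_⟩
  · simp only [Fin.sum_univ_succ, Fin.cons_zero, Fin.cons_succ, Finset.sum_const,
      Finset.card_univ, Fintype.card_fin, nsmul_eq_mul, hc2]
    field_simp
    ring
  · simp only [Fin.sum_univ_succ, Fin.cons_zero, Fin.cons_succ, Finset.sum_const,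
      Finset.card_univ, Fintype.card_fin, nsmul_eq_mul, abs_of_nonneg hδ0, abs_of_nonneg hc0]
    have : (n * c) ^ 2 = n * (1 - δ ^ 2) := by rw [mul_pow, hc2]; field_simp
    nlinarith [mul_nonneg hδ0 (mul_nonneg (Nat.cast_nonneg n) hc0)]

theorem stmt15 (ε : ℝ) (hε : 0 < ε) :
    ∃ (d : ℕ) (v w : Fin d → ℝ),
      (∀ k, 0 ≤ v k) ∧ (∀ k, 0 ≤ w k) ∧
      (∑ k, v k ^ 2) = 1 ∧ (∑ k, w k ^ 2) = 1 ∧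
      0 < (∑ k, v k * w k) ∧ (∑ k, v k * w k) ≤ ε ∧
      2 * (∑ k, |v k|) * (∑ k, |w k|) ≤
        (∑ k, v k * w k) * ((∑ k, |v k|) ^ 2 + (∑ k, |w k|) ^ 2) := by
  set δ := min ε (1 / 2)
  have hδ0 : 0 < δ := lt_min hε (by norm_num)
  have hδ1 : δ ≤ 1 / 2 := min_le_right _ _
  obtain ⟨n, hn⟩ := exists_nat_gt (8 / δ ^ 2)
  have hn0 : 0 < n := by exact_mod_cast (div_pos (by norm_num) (by positivity)).trans hn
  obtain ⟨w, hw0, hw1, hwδ, hwl1⟩ :=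
    exists_nonneg_unit_vector_head_eq_sq_l1_ge hδ0.le (by linarith) hn0
  have hδl1 : 2 ≤ δ * ∑ k, |w k| := by
    have h8 : 8 ≤ n * δ ^ 2 := ((div_lt_iff₀ (by positivity)).1 hn).le
    have h34 : 3 / 4 ≤ 1 - δ ^ 2 := by nlinarith
    refine abs_le_of_sq_le_sq' ?_ (by positivity) |>.2
    calc (2 : ℝ) ^ 2 ≤ (n * δ ^ 2) * (1 - δ ^ 2) := by nlinarith
      _ = δ ^ 2 * (n * (1 - δ ^ 2)) := by ring
      _ ≤ δ ^ 2 * (∑ k, |w k|) ^ 2 := mul_le_mul_of_nonneg_left hwl1 (sq_nonneg δ)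
      _ = (δ * ∑ k, |w k|) ^ 2 := by ring
  set v : Fin (n + 1) → ℝ := Pi.single 0 1
  have hvw : ∑ k, v k * w k = δ := by simp [v, Pi.single_apply, hwδ]
  have hv0 : ∀ k, 0 ≤ v k := fun k => by by_cases hk : k = 0 <;> simp [v, hk]
  have hv1 : ∑ k, |v k| = 1 := by simp [abs_of_nonneg (hv0 _), v]
  refine ⟨n + 1, v, w, hv0, hw0, by simp [v, Pi.single_apply], hw1,
    hvw ▸ hδ0, hvw ▸ min_le_left _ _, ?_⟩
  rw [hv1, hvw]
  exact two_mul_le_mul_sq_add_sq (by positivity) hδ0.le (by linarith)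
end
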